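/- Consider the nonmonotone descent method with oracle applied to p, run with tolerance ε = 0, and suppose inf p ∈ ℝ. Let x* ∈ ℝⁿ be an accumulation point of the sequence {xʲ}. Then x* is Υ-stationary for p: there exists z* ∈ O(x*) such that ∇ₓF(x*, z*) = 0, i.e., ∇f(x*) + (1/μ) Jc(x*)ᵀ (c(x*) + μŷ − z*) = 0. -/

import Mathlib

/-!
The reference values `Φⱼ` dominate `p(xʲ)`, decrease by at least
`ν α θ γⱼ ‖∇pʲ‖ ‖dʲ‖` per iteration and are bounded below by `inf p`, so `γⱼ ‖∇pʲ‖ ‖dʲ‖` is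
summable. Prox-boundedness with threshold above `μ` keeps the oracle outputs `zʲ` bounded along a
subsequence converging to `x*`, and lower semicontinuity of `g` puts every limit `z*` in `O(x*)`.
If `∇ₓF(x*, z*) ≠ 0`, the steps `γⱼ` tend to zero along the subsequence, so backtracking rejected
the step `γⱼ / β`. Since `p ≤ F(·, zʲ) + g(zʲ)` with equality at `xʲ`, that rejection is a failed
Armijo test for the smooth function `F(·, zʲ)`, and the mean value theorem with continuity of
`∇ₓF` then forces `(1 - α) θ ‖∇ₓF(x*, z*)‖` below any positive bound.
-/

open Filter Topology Bornology

noncomputable section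

variable {H : Type*} [NormedAddCommGroup H] [InnerProductSpace ℝ H]

/-- The regular (Fréchet) subdifferential of an extended-real-valued function `h` at `x`:
`v` belongs to it iff `h x` is finite and
`liminf_{w → x, w ≠ x} (h w − h x − ⟨v, w − x⟩)/‖w − x‖ ≥ 0`. -/
def regSubdiff (h : H → EReal) (x : H) : Set H :=
  {v | h x ≠ ⊤ ∧ h x ≠ ⊥ ∧ (0 : EReal) ≤
    Filter.liminf
      (fun w => (h w - h x - ((inner ℝ v (w - x) : ℝ) : EReal)) / ((‖w - x‖ : ℝ) : EReal))
      (𝓝[≠] x)}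

/-- The limiting (Mordukhovich) subdifferential of `h` at `x`: limits of regular subgradients
along `h`-attentively convergent sequences. -/
def limSubdiff (h : H → EReal) (x : H) : Set H :=
  {v | ∃ xs vs : ℕ → H,
      Tendsto xs atTop (𝓝 x) ∧ Tendsto (fun k => h (xs k)) atTop (𝓝 (h x)) ∧
      (∀ k, vs k ∈ regSubdiff h (xs k)) ∧ Tendsto vs atTop (𝓝 v)}

/-- The proximal mapping of `g` with parameter `γ` evaluated at `u`, as a set:
`argmin_z { g(z) + ‖z − u‖²/(2γ) }`. -/
def proxSet (g : H → EReal) (γ : ℝ) (u : H) : Set H :=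
  {z | ∀ w, g z + ((‖z - u‖ ^ 2 / (2 * γ) : ℝ) : EReal) ≤
        g w + ((‖w - u‖ ^ 2 / (2 * γ) : ℝ) : EReal)}

/-- `g + ‖·‖²/(2γ)` is bounded below on the whole space. -/
def ProxBoundedAt (g : H → EReal) (γ : ℝ) : Prop :=
  ∃ b : ℝ, ∀ z, (b : EReal) ≤ g z + ((‖z‖ ^ 2 / (2 * γ) : ℝ) : EReal)

/-- `g` is prox-bounded: `g + ‖·‖²/(2γ)` is bounded below for some `γ > 0`. -/
def ProxBounded (g : H → EReal) : Prop :=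
  ∃ γ > (0 : ℝ), ProxBoundedAt g γ

/-- The limiting normal cone to `D` at `z`: limits of `λᵏ (vᵏ − wᵏ)` with `λᵏ ≥ 0`,
`wᵏ` a Euclidean projection of `vᵏ` onto `D`, and `vᵏ → z`. -/
def limNormalCone {H' : Type*} [NormedAddCommGroup H'] [NormedSpace ℝ H']
    (D : Set H') (z : H') : Set H' :=
  {v | ∃ (vs ws : ℕ → H') (ls : ℕ → ℝ), (∀ k, 0 ≤ ls k) ∧
      (∀ k, ws k ∈ D ∧ ∀ u ∈ D, ‖ws k - vs k‖ ≤ ‖u - vs k‖) ∧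
      Tendsto vs atTop (𝓝 z) ∧ Tendsto (fun k => ls k • (vs k - ws k)) atTop (𝓝 v)}


/-- Smooth part of the explicit AL function: `F(x,z) = f(x) + ‖c(x) + μŷ − z‖²/(2μ)`. -/
def Ffun {n m : ℕ} (f : EuclideanSpace ℝ (Fin n) → ℝ)
    (c : EuclideanSpace ℝ (Fin n) → EuclideanSpace ℝ (Fin m))
    (μ : ℝ) (yh : EuclideanSpace ℝ (Fin m))
    (xx : EuclideanSpace ℝ (Fin n)) (zz : EuclideanSpace ℝ (Fin m)) : ℝ :=
  f xx + ‖c xx + μ • yh - zz‖ ^ 2 / (2 * μ)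

/-- The implicit AL function: `p(x) = inf_z { F(x,z) + g(z) }`. -/
def pfun {n m : ℕ} (f : EuclideanSpace ℝ (Fin n) → ℝ)
    (c : EuclideanSpace ℝ (Fin n) → EuclideanSpace ℝ (Fin m))
    (g : EuclideanSpace ℝ (Fin m) → EReal)
    (μ : ℝ) (yh : EuclideanSpace ℝ (Fin m)) (xx : EuclideanSpace ℝ (Fin n)) : EReal :=
  ⨅ zz, (((Ffun f c μ yh xx zz : ℝ) : EReal) + g zz)

/-- The partial gradient `∇ₓ F(x, z)`. -/
def gradF {n m : ℕ} (f : EuclideanSpace ℝ (Fin n) → ℝ)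
    (c : EuclideanSpace ℝ (Fin n) → EuclideanSpace ℝ (Fin m))
    (μ : ℝ) (yh : EuclideanSpace ℝ (Fin m))
    (xx : EuclideanSpace ℝ (Fin n)) (zz : EuclideanSpace ℝ (Fin m)) :
    EuclideanSpace ℝ (Fin n) :=
  gradient (fun x' => Ffun f c μ yh x' zz) xx

theorem EReal.continuousAt_add_coe (a : EReal) (r : ℝ) :
    ContinuousAt (fun p : EReal × EReal => p.1 + p.2) (a, r) :=
  EReal.continuousAt_add (.inr (EReal.coe_ne_bot r)) (.inr (EReal.coe_ne_top r))

theorem EReal.lowerSemicontinuous_add_coe {Y : Type*} [TopologicalSpace Y] {f : Y → EReal}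
    {r : Y → ℝ} (hf : LowerSemicontinuous f) (hr : Continuous r) :
    LowerSemicontinuous fun y => f y + (r y : EReal) :=
  hf.add' (continuous_coe_real_ereal.comp hr).lowerSemicontinuous
    fun y => EReal.continuousAt_add_coe (f y) (r y)

theorem EReal.continuous_const_add_coe {Y : Type*} [TopologicalSpace Y] (a : EReal) {r : Y → ℝ}
    (hr : Continuous r) : Continuous fun y => a + (r y : EReal) :=
  continuous_iff_continuousAt.mpr fun y =>
    (EReal.continuousAt_add_coe a (r y)).comp (f := fun y => ((a, (r y : EReal)) : EReal × EReal))
      (continuousAt_const.prodMk (continuous_coe_real_ereal.comp hr).continuousAt)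

theorem EReal.exists_coe_of_affine_rec {Φ : ℕ → EReal} {a : ℝ} {v : ℕ → ℝ}
    (h0 : ∃ t : ℝ, Φ 0 = t) (hrec : ∀ j, Φ (j + 1) = a * Φ j + v j) :
    ∃ r : ℕ → ℝ, ∀ j, Φ j = r j := by
  have : ∀ j, ∃ t : ℝ, Φ j = t := by
    intro j
    induction j with
    | zero => exact h0
    | succ j ih =>
      obtain ⟨t, ht⟩ := ih
      exact ⟨a * t + v j, by rw [hrec, ht]; norm_cast⟩
  exact ⟨fun j => (this j).choose, fun j => (this j).choose_spec⟩

theorem LowerSemicontinuous.isClosed_setOf_le {X α : Type*} [TopologicalSpace X] [LinearOrder α]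
    [TopologicalSpace α] [ClosedIciTopology α] {f h : X → α} (hf : LowerSemicontinuous f)
    (hh : Continuous h) : IsClosed {x | f x ≤ h x} :=
  hf.isClosed_epigraph.preimage (continuous_id.prodMk hh)

theorem le_add_one_of_mul_sq_le {a B C t : ℝ} (ha : 0 < a) (hB : 0 ≤ B) (hC : 0 ≤ C)
    (h : a * t ^ 2 ≤ B * t + C) : t ≤ (B + C) / a + 1 := by
  rcases le_or_gt t 1 with ht | ht
  · linarith [div_nonneg (add_nonneg hB hC) ha.le]
  · have : a * t ≤ B + C := le_of_mul_le_mul_right (by nlinarith) (by linarith : (0 : ℝ) < t)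
    linarith [(le_div_iff₀ ha).mpr (by linarith : t * a ≤ B + C)]

theorem tendsto_zero_of_tendsto_mul_zero {ι : Type*} {l : Filter ι} {a b : ι → ℝ} {δ : ℝ}
    (hab : Tendsto (fun k => a k * b k) l (𝓝 0)) (hb : Tendsto b l (𝓝 δ)) (hδ : δ ≠ 0) :
    Tendsto a l (𝓝 0) := by
  have := hab.div hb hδ
  rw [zero_div] at this
  exact this.congr' ((hb.eventually_ne hδ).mono fun k hk => mul_div_cancel_right₀ _ hk)

theorem eventually_forall_closedBall_dist_lt {X Z Y ι : Type*} [PseudoMetricSpace X]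
    [TopologicalSpace Z] [PseudoMetricSpace Y] {l : Filter ι} {Ψ : X × Z → Y} {x₀ : X} {z₀ : Z}
    (hΨ : ContinuousAt Ψ (x₀, z₀)) {x : ι → X} {z : ι → Z} {s : ι → ℝ}
    (hx : Tendsto x l (𝓝 x₀)) (hz : Tendsto z l (𝓝 z₀)) (hs : Tendsto s l (𝓝 0))
    {ε : ℝ} (hε : 0 < ε) :
    ∀ᶠ k in l, ∀ u ∈ Metric.closedBall (x k) (s k), dist (Ψ (u, z k)) (Ψ (x k, z k)) < ε := by
  obtain ⟨U, hU, V, hV, hUV⟩ :=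
    mem_nhds_prod_iff.mp (hΨ (Metric.ball_mem_nhds (Ψ (x₀, z₀)) (half_pos hε)))
  obtain ⟨r, hr, hrU⟩ := Metric.mem_nhds_iff.mp hU
  filter_upwards [hx (Metric.ball_mem_nhds x₀ (half_pos hr)), hz hV,
    hs (Iio_mem_nhds (half_pos hr))] with k hxk hzk hsk u hu
  have hnear : ∀ y, dist y (x k) ≤ s k → dist (Ψ (y, z k)) (Ψ (x₀, z₀)) < ε / 2 := by
    intro y hy
    refine hUV ⟨hrU ?_, hzk⟩
    rw [Set.mem_preimage, Metric.mem_ball] at hxk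
    rw [Metric.mem_ball]
    linarith [dist_triangle y (x k) x₀, show s k < r / 2 from hsk]
  linarith [dist_triangle_right (Ψ (u, z k)) (Ψ (x k, z k)) (Ψ (x₀, z₀)),
    hnear u hu, hnear (x k) (by simpa using (dist_nonneg.trans hu))]

section NonmonotoneDescent

variable {P Φ D : ℕ → ℝ} {ν : ℝ}

theorem le_of_nonmonotone_average (hν : ν ≤ 1) (h0 : Φ 0 = P 0)
    (hrec : ∀ j, Φ (j + 1) = (1 - ν) * Φ j + ν * P (j + 1)) (hdec : ∀ j, P (j + 1) ≤ Φ j) :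
    ∀ j, P j ≤ Φ j
  | 0 => h0.ge
  | j + 1 => by
    have := le_of_nonmonotone_average hν h0 hrec hdec j
    nlinarith [hrec j, mul_nonneg (sub_nonneg.mpr hν) (sub_nonneg.mpr (hdec j))]

theorem summable_of_nonmonotone_average (hν : 0 < ν)
    (hrec : ∀ j, Φ (j + 1) = (1 - ν) * Φ j + ν * P (j + 1))
    (hdec : ∀ j, P (j + 1) ≤ Φ j - D j) (hD : ∀ j, 0 ≤ D j) {b : ℝ} (hb : ∀ j, b ≤ Φ j) :
    Summable D := by
  have hstep : ∀ j, Φ (j + 1) + ν * D j ≤ Φ j := fun j => by nlinarith [hrec j, hdec j]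
  have hsum : ∀ n, ∑ j ∈ Finset.range n, ν * D j ≤ Φ 0 - Φ n := by
    intro n
    induction n with
    | zero => simp
    | succ n ih => rw [Finset.sum_range_succ]; linarith [hstep n]
  refine (summable_mul_left_iff hν.ne').mp <|
    summable_of_sum_range_le (c := Φ 0 - b) (fun j => mul_nonneg hν.le (hD j)) fun n => ?_
  linarith [hsum n, hb n]

theorem le_and_tendsto_zero_of_nonmonotone_armijo {γ s e : ℕ → ℝ} {α θ b : ℝ} (hα : 0 < α)
    (hθ : 0 < θ) (hν : ν ∈ Set.Ioc 0 1) (h0 : Φ 0 = P 0)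
    (hrec : ∀ j, Φ (j + 1) = (1 - ν) * Φ j + ν * P (j + 1))
    (harmijo : ∀ j, P (j + 1) ≤ Φ j + α * γ j * s j) (hγ : ∀ j, 0 ≤ γ j)
    (hs : ∀ j, s j ≤ -(θ * e j)) (he : ∀ j, 0 ≤ e j) (hb : ∀ j, b ≤ P j) :
    (∀ j, P j ≤ Φ j) ∧ Tendsto (fun j => γ j * e j) atTop (𝓝 0) := by
  have hD : ∀ j, 0 ≤ α * θ * (γ j * e j) := fun j =>
    mul_nonneg (mul_nonneg hα.le hθ.le) (mul_nonneg (hγ j) (he j))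
  have hdec : ∀ j, P (j + 1) ≤ Φ j - α * θ * (γ j * e j) := fun j => by
    nlinarith [harmijo j, mul_le_mul_of_nonneg_left (hs j) (mul_nonneg hα.le (hγ j))]
  have hle := le_of_nonmonotone_average hν.2 h0 hrec fun j => (hdec j).trans (sub_le_self _ (hD j))
  refine ⟨hle, ((summable_mul_left_iff (mul_pos hα hθ).ne').mp ?_).tendsto_atTop_zero⟩
  exact summable_of_nonmonotone_average hν.1 hrec hdec hD fun j => (hb j).trans (hle j)

end NonmonotoneDescent

section LineSearch

variable {E : Type*} [NormedAddCommGroup E] [InnerProductSpace ℝ E] [CompleteSpace E]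

theorem mul_norm_lt_of_armijo_fail {m : E → ℝ} {m' : E → E} {x d : E} {t α θ ε : ℝ}
    (hm : ∀ u ∈ segment ℝ x (x + t • d), HasGradientAt m (m' u) u)
    (hm' : ∀ u ∈ segment ℝ x (x + t • d), ‖m' u - m' x‖ ≤ ε) (hα : α ≤ 1) (ht : 0 ≤ t)
    (hdir : inner ℝ (m' x) d ≤ -(θ * (‖m' x‖ * ‖d‖)))
    (hfail : m x + α * t * inner ℝ (m' x) d < m (x + t • d)) :
    (1 - α) * θ * ‖m' x‖ < ε := by
  have hmvt : |m (x + t • d) - m x - t * inner ℝ (m' x) d| ≤ ε * (t * ‖d‖) := by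
    have := (convex_segment x (x + t • d)).norm_image_sub_le_of_norm_hasFDerivWithin_le'
      (f' := fun u => InnerProductSpace.toDual ℝ E (m' u))
      (fun u hu => (hm u hu).hasFDerivAt.hasFDerivWithinAt)
      (fun u hu => by rw [← map_sub, LinearIsometryEquiv.norm_map]; exact hm' u hu)
      (left_mem_segment ℝ _ _) (right_mem_segment ℝ _ _)
    rwa [add_sub_cancel_left, InnerProductSpace.toDual_apply_apply, real_inner_smul_right,
      norm_smul, Real.norm_of_nonneg ht, Real.norm_eq_abs] at this
  have hdecr : (1 - α) * θ * ‖m' x‖ * (t * ‖d‖) ≤ (1 - α) * t * -inner ℝ (m' x) d := by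
    nlinarith [mul_le_mul_of_nonneg_left hdir (mul_nonneg (sub_nonneg.mpr hα) ht)]
  refine lt_of_mul_lt_mul_right ?_ (mul_nonneg ht (norm_nonneg d))
  linarith [(abs_le.mp hmvt).2]

theorem eq_zero_of_armijo_backtracking {Z : Type*} [TopologicalSpace Z] {Ψ : E × Z → E}
    {x₀ : E} {z₀ : Z} (hΨ : ContinuousAt Ψ (x₀, z₀)) {m : ℕ → E → ℝ} {x d : ℕ → E}
    {z : ℕ → Z} {γ : ℕ → ℝ} {l : ℕ → ℕ} {α β θ ω : ℝ}
    (hm : ∀ k u, HasGradientAt (m k) (Ψ (u, z k)) u)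
    (hx : Tendsto x atTop (𝓝 x₀)) (hz : Tendsto z atTop (𝓝 z₀))
    (hα : α < 1) (hβ : 0 < β) (hθ : 0 < θ) (hω : 0 < ω)
    (hdir : ∀ k, inner ℝ (Ψ (x k, z k)) (d k) ≤ -(θ * (‖Ψ (x k, z k)‖ * ‖d k‖)))
    (hdlen : ∀ k, ω * ‖Ψ (x k, z k)‖ ≤ ‖d k‖) (hγ : ∀ k, γ k = β ^ l k)
    (hq : Tendsto (fun k => γ k * (‖Ψ (x k, z k)‖ * ‖d k‖)) atTop (𝓝 0))
    (hfail : ∀ k, ∀ l' < l k, m k (x k) + α * β ^ l' * inner ℝ (Ψ (x k, z k)) (d k) <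
      m k (x k + β ^ l' • d k)) :
    Ψ (x₀, z₀) = 0 := by
  by_contra hne
  have hδ : 0 < ‖Ψ (x₀, z₀)‖ := norm_pos_iff.mpr hne
  have hG : Tendsto (fun k => ‖Ψ (x k, z k)‖) atTop (𝓝 ‖Ψ (x₀, z₀)‖) :=
    (hΨ.tendsto.comp (hx.prodMk_nhds hz)).norm
  have hγnonneg : ∀ k, 0 ≤ γ k := fun k => hγ k ▸ pow_nonneg hβ.le _
  have hs : Tendsto (fun k => γ k * ‖d k‖) atTop (𝓝 0) :=
    tendsto_zero_of_tendsto_mul_zero (hq.congr fun k => by ring) hG hδ.ne'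
  have hγ0 : Tendsto γ atTop (𝓝 0) :=
    tendsto_zero_of_tendsto_mul_zero
      (squeeze_zero (fun k => mul_nonneg (hγnonneg k) (by positivity))
        (fun k => mul_le_mul_of_nonneg_left (hdlen k) (hγnonneg k)) hs)
      (hG.const_mul ω) (by positivity)
  have hε : 0 < (1 - α) * θ * ‖Ψ (x₀, z₀)‖ / 2 :=
    half_pos (mul_pos (mul_pos (sub_pos.mpr hα) hθ) hδ)
  obtain ⟨k, hGk, hγk, hball⟩ := ((hG.eventually (lt_mem_nhds (half_lt_self hδ))).and
    ((hγ0.eventually (gt_mem_nhds one_pos)).and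
      (eventually_forall_closedBall_dist_lt hΨ hx hz (by simpa using hs.div_const β) hε))).exists
  -- the last rejected trial step is `β ^ (l k - 1) = γ k / β`
  have hl : l k ≠ 0 := fun h => by rw [hγ k, h, pow_zero] at hγk; exact lt_irrefl _ hγk
  have hseg : segment ℝ (x k) (x k + β ^ (l k - 1) • d k) ⊆
      Metric.closedBall (x k) (γ k * ‖d k‖ / β) := by
    refine (convex_closedBall _ _).segment_subset (Metric.mem_closedBall_self
      (div_nonneg (mul_nonneg (hγnonneg k) (norm_nonneg _)) hβ.le)) ?_
    rw [Metric.mem_closedBall, dist_self_add_left, norm_smul, Real.norm_of_nonneg (by positivity),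
      hγ k, ← pow_sub_one_mul hl]
    exact le_of_eq (by field_simp)
  have hlt := mul_norm_lt_of_armijo_fail (fun u _ => hm k u)
    (fun u hu => by rw [← dist_eq_norm]; exact (hball u (hseg hu)).le) hα.le
    (pow_nonneg hβ.le _) (hdir k) (hfail k _ (Nat.sub_lt (Nat.pos_of_ne_zero hl) one_pos))
  nlinarith [mul_lt_mul_of_pos_left hGk (mul_pos (sub_pos.mpr hα) hθ)]

end LineSearch

section Prox

variable {X : Type*} [NormedAddCommGroup X] {g : X → EReal} {μ γ₀ : ℝ}

theorem ProxBoundedAt.ne_bot (hg : ProxBoundedAt g γ₀) (z : X) : g z ≠ ⊥ := by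
  obtain ⟨b, hb⟩ := hg
  intro hz
  have := hb z
  rw [hz, EReal.bot_add, le_bot_iff] at this
  exact EReal.coe_ne_bot b this

theorem isClosed_setOf_mem_proxSet (hg : LowerSemicontinuous g) (μ : ℝ) :
    IsClosed {p : X × X | p.2 ∈ proxSet g μ p.1} := by
  have hquad : ∀ v : X × X → X, Continuous v →
      Continuous fun p : X × X => ‖v p - p.1‖ ^ 2 / (2 * μ) := fun v hv => by fun_prop
  simp only [proxSet, Set.mem_ofPred_eq]
  simp only [Set.ofPred_forall]
  refine isClosed_iInter fun w => LowerSemicontinuous.isClosed_setOf_le (X := X × X) (α := EReal)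
    (EReal.lowerSemicontinuous_add_coe (hg.comp continuous_snd) (hquad _ continuous_snd))
    (EReal.continuous_const_add_coe (g w) (hquad _ continuous_const))

theorem add_sq_norm_le_of_mem_proxSet {b G : ℝ}
    (hb : ∀ z, (b : EReal) ≤ g z + ((‖z‖ ^ 2 / (2 * γ₀) : ℝ) : EReal)) {u w z : X}
    (hw : g w = G) (hz : z ∈ proxSet g μ u) :
    b + ‖z - u‖ ^ 2 / (2 * μ) ≤ G + ‖w - u‖ ^ 2 / (2 * μ) + ‖z‖ ^ 2 / (2 * γ₀) := by
  have h := hz w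
  rw [hw] at h
  have : ((b + ‖z - u‖ ^ 2 / (2 * μ) : ℝ) : EReal) ≤
      ((G + ‖w - u‖ ^ 2 / (2 * μ) + ‖z‖ ^ 2 / (2 * γ₀) : ℝ) : EReal) :=
    calc ((b + ‖z - u‖ ^ 2 / (2 * μ) : ℝ) : EReal)
        = (b : EReal) + ((‖z - u‖ ^ 2 / (2 * μ) : ℝ) : EReal) := EReal.coe_add _ _
      _ ≤ g z + ((‖z‖ ^ 2 / (2 * γ₀) : ℝ) : EReal) + ((‖z - u‖ ^ 2 / (2 * μ) : ℝ) : EReal) :=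
        add_le_add (hb z) le_rfl
      _ = g z + ((‖z - u‖ ^ 2 / (2 * μ) : ℝ) : EReal) + ((‖z‖ ^ 2 / (2 * γ₀) : ℝ) : EReal) :=
        add_right_comm _ _ _
      _ ≤ (G : EReal) + ((‖w - u‖ ^ 2 / (2 * μ) : ℝ) : EReal) +
          ((‖z‖ ^ 2 / (2 * γ₀) : ℝ) : EReal) := add_le_add h le_rfl
      _ = ((G + ‖w - u‖ ^ 2 / (2 * μ) + ‖z‖ ^ 2 / (2 * γ₀) : ℝ) : EReal) := by norm_cast
  exact_mod_cast this

theorem ProxBoundedAt.isBounded_biUnion_proxSet (hg : ProxBoundedAt g γ₀) (hμ : 0 < μ)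
    (hμγ : μ < γ₀) {w : X} (hw : g w ≠ ⊤) {S : Set X} (hS : Bornology.IsBounded S) :
    Bornology.IsBounded (⋃ u ∈ S, proxSet g μ u) := by
  obtain ⟨G, hG⟩ : ∃ G : ℝ, g w = G := ⟨_, (EReal.coe_toReal hw (hg.ne_bot w)).symm⟩
  obtain ⟨b, hb⟩ := hg
  obtain ⟨U, hU⟩ := hS.subset_closedBall 0
  have ha : 0 < 1 / (2 * μ) - 1 / (2 * γ₀) := by
    rw [sub_pos]; exact one_div_lt_one_div_of_lt (by positivity) (by linarith)
  set C := |G - b + (‖w‖ + U) ^ 2 / (2 * μ)|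
  refine (Metric.isBounded_closedBall (x := (0 : X))
    (r := (U / μ + C) / (1 / (2 * μ) - 1 / (2 * γ₀)) + 1)).subset ?_
  refine Set.iUnion₂_subset fun u hu z hz => ?_
  have hu : ‖u‖ ≤ U := mem_closedBall_zero_iff.mp (hU hu)
  have hU0 : 0 ≤ U := (norm_nonneg u).trans hu
  rw [mem_closedBall_zero_iff]
  refine le_add_one_of_mul_sq_le ha (by positivity) (abs_nonneg _) ?_
  have hzu : ‖z‖ ^ 2 - 2 * U * ‖z‖ ≤ ‖z - u‖ ^ 2 := by
    have := pow_le_pow_left₀ (abs_nonneg _) (abs_norm_sub_norm_le z u) 2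
    rw [sq_abs] at this
    nlinarith [mul_le_mul_of_nonneg_left hu (norm_nonneg z), sq_nonneg ‖u‖]
  have hwu : ‖w - u‖ ≤ ‖w‖ + U := (norm_sub_le w u).trans (by linarith)
  have e1 : ‖z‖ ^ 2 / (2 * μ) - U / μ * ‖z‖ ≤ ‖z - u‖ ^ 2 / (2 * μ) := by
    rw [show ‖z‖ ^ 2 / (2 * μ) - U / μ * ‖z‖ = (‖z‖ ^ 2 - 2 * U * ‖z‖) / (2 * μ) by
      field_simp]
    gcongr
  have e2 : ‖w - u‖ ^ 2 / (2 * μ) ≤ (‖w‖ + U) ^ 2 / (2 * μ) := by gcongr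
  have e3 : (1 / (2 * μ) - 1 / (2 * γ₀)) * ‖z‖ ^ 2 = ‖z‖ ^ 2 / (2 * μ) - ‖z‖ ^ 2 / (2 * γ₀) := by
    ring
  linarith [add_sq_norm_le_of_mem_proxSet hb hG hz, le_abs_self (G - b + (‖w‖ + U) ^ 2 / (2 * μ))]

theorem ProxBoundedAt.exists_mem_proxSet_tendsto [ProperSpace X] (hg : ProxBoundedAt g γ₀)
    (hglsc : LowerSemicontinuous g) (hμ : 0 < μ) (hμγ : μ < γ₀) {w : X} (hw : g w ≠ ⊤)
    {u z : ℕ → X} {ulim : X} (hu : Tendsto u atTop (𝓝 ulim)) (hz : ∀ k, z k ∈ proxSet g μ (u k)) :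
    ∃ zlim ∈ proxSet g μ ulim, ∃ ψ : ℕ → ℕ, StrictMono ψ ∧ Tendsto (z ∘ ψ) atTop (𝓝 zlim) := by
  obtain ⟨zlim, -, ψ, hψ, hzψ⟩ := tendsto_subseq_of_bounded
    (hg.isBounded_biUnion_proxSet hμ hμγ hw (Metric.isBounded_range_of_tendsto u hu))
    fun k => Set.mem_biUnion (Set.mem_range_self k) (hz k)
  exact ⟨zlim, (isClosed_setOf_mem_proxSet hglsc μ).mem_of_tendsto
    ((hu.comp hψ.tendsto_atTop).prodMk_nhds hzψ) (Eventually.of_forall fun k => hz _), ψ, hψ, hzψ⟩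

end Prox

section ImplicitAL

variable {n m : ℕ} {f : EuclideanSpace ℝ (Fin n) → ℝ}
  {c : EuclideanSpace ℝ (Fin n) → EuclideanSpace ℝ (Fin m)} {g : EuclideanSpace ℝ (Fin m) → EReal}
  {μ : ℝ} {yh : EuclideanSpace ℝ (Fin m)}

theorem pfun_le (x : EuclideanSpace ℝ (Fin n)) (z : EuclideanSpace ℝ (Fin m)) :
    pfun f c g μ yh x ≤ (Ffun f c μ yh x z : EReal) + g z :=
  iInf_le _ z

theorem pfun_ne_top {w : EuclideanSpace ℝ (Fin m)} (hw : g w ≠ ⊤) (x : EuclideanSpace ℝ (Fin n)) :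
    pfun f c g μ yh x ≠ ⊤ :=
  ne_top_of_le_ne_top (EReal.add_ne_top (EReal.coe_ne_top _) hw) (pfun_le x w)

theorem pfun_eq_of_mem_proxSet {x : EuclideanSpace ℝ (Fin n)} {z : EuclideanSpace ℝ (Fin m)}
    (hz : z ∈ proxSet g μ (c x + μ • yh)) :
    pfun f c g μ yh x = (Ffun f c μ yh x z : EReal) + g z := by
  refine le_antisymm (pfun_le x z) (le_iInf fun w => ?_)
  have := add_le_add (le_refl (f x : EReal)) (hz w)
  simp only [Ffun, EReal.coe_add, norm_sub_rev _ (c x + μ • yh)] at this ⊢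
  rw [add_comm (g z), add_comm (g w)] at this
  rwa [add_assoc, add_assoc]

theorem sub_le_Ffun_sub_of_mem_proxSet {P : EuclideanSpace ℝ (Fin n) → ℝ}
    (hP : ∀ x, pfun f c g μ yh x = P x) {x : EuclideanSpace ℝ (Fin n)}
    {z : EuclideanSpace ℝ (Fin m)} (hz : z ∈ proxSet g μ (c x + μ • yh))
    (x' : EuclideanSpace ℝ (Fin n)) :
    P x' - P x ≤ Ffun f c μ yh x' z - Ffun f c μ yh x z := by
  have heq := pfun_eq_of_mem_proxSet (f := f) hz
  have hle := pfun_le (f := f) (c := c) (g := g) (μ := μ) (yh := yh) x' z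
  rw [hP] at heq hle
  generalize g z = G at heq hle
  induction G using EReal.rec with
  | bot => simp at heq
  | top => simp at heq
  | coe G =>
    norm_cast at heq hle
    linarith

theorem hasGradientAt_Ffun (hf : Differentiable ℝ f) (hc : Differentiable ℝ c)
    (z : EuclideanSpace ℝ (Fin m)) (x : EuclideanSpace ℝ (Fin n)) :
    HasGradientAt (fun x' => Ffun f c μ yh x' z)
      (gradient f x + μ⁻¹ • ContinuousLinearMap.adjoint (fderiv ℝ c x) (c x + μ • yh - z)) x := by
  have hw : HasFDerivAt (fun x' => c x' + μ • yh - z) (fderiv ℝ c x) x :=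
    ((hc x).hasFDerivAt.add_const _).sub_const _
  rw [hasGradientAt_iff_hasFDerivAt]
  refine ((hf x).hasFDerivAt.add (hw.norm_sq.mul_const (2 * μ)⁻¹)).congr_fderiv ?_
  ext s
  simp only [map_add, map_smul, add_apply, smul_apply, ContinuousLinearMap.comp_apply,
    coe_innerSL_apply, smul_eq_mul, nsmul_eq_mul, Nat.cast_ofNat, gradient,
    LinearIsometryEquiv.apply_symm_apply, InnerProductSpace.toDual_apply_apply,
    ContinuousLinearMap.adjoint_inner_left, add_right_inj]
  ring

theorem gradF_eq (hf : Differentiable ℝ f) (hc : Differentiable ℝ c)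
    (x : EuclideanSpace ℝ (Fin n)) (z : EuclideanSpace ℝ (Fin m)) :
    gradF f c μ yh x z =
      gradient f x + μ⁻¹ • ContinuousLinearMap.adjoint (fderiv ℝ c x) (c x + μ • yh - z) :=
  (hasGradientAt_Ffun hf hc z x).gradient

theorem continuous_gradF (hf : ContDiff ℝ 1 f) (hc : ContDiff ℝ 1 c) :
    Continuous fun p : EuclideanSpace ℝ (Fin n) × EuclideanSpace ℝ (Fin m) =>
      gradF f c μ yh p.1 p.2 := by
  have hgrad : Continuous (gradient f) :=
    (InnerProductSpace.toDual ℝ _).symm.continuous.comp (hf.continuous_fderiv one_ne_zero)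
  have hadj : Continuous fun x => ContinuousLinearMap.adjoint (fderiv ℝ c x) :=
    ContinuousLinearMap.adjoint.continuous.comp (hc.continuous_fderiv one_ne_zero)
  refine Continuous.congr ?_ fun p =>
    (gradF_eq (hf.differentiable one_ne_zero) (hc.differentiable one_ne_zero) p.1 p.2).symm
  have hc' := hc.continuous
  fun_prop

end ImplicitAL

theorem descent_method_accumulation_is_Upsilon_stationary_general {n m : ℕ}
    (f : EuclideanSpace ℝ (Fin n) → ℝ)
    (c : EuclideanSpace ℝ (Fin n) → EuclideanSpace ℝ (Fin m))
    (g : EuclideanSpace ℝ (Fin m) → EReal)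
    (hf : ContDiff ℝ 1 f) (hc : ContDiff ℝ 1 c)
    (hgproper : ∃ z, g z ≠ ⊤)
    (hglsc : LowerSemicontinuous g)
    (μ : ℝ) (hμpos : 0 < μ)
    (hμthr : ∃ γ0 : ℝ, μ < γ0 ∧ ProxBoundedAt g γ0)
    (yh : EuclideanSpace ℝ (Fin m))
    -- parameters of the descent method
    (α β θ ω ν : ℝ)
    (hα : α ∈ Set.Ioo (0 : ℝ) 1) (hβ : β ∈ Set.Ioo (0 : ℝ) 1)
    (hθ : θ ∈ Set.Ioo (0 : ℝ) 1)
    (hω : ω ∈ Set.Ioc (0 : ℝ) 1) (hν : ν ∈ Set.Ioc (0 : ℝ) 1)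
    -- iterates of the method (run with tolerance ε = 0, never terminating)
    (x : ℕ → EuclideanSpace ℝ (Fin n)) (zs : ℕ → EuclideanSpace ℝ (Fin m))
    (d : ℕ → EuclideanSpace ℝ (Fin n)) (γ : ℕ → ℝ) (l : ℕ → ℕ) (Φ : ℕ → EReal)
    (hΦ0 : Φ 0 = pfun f c g μ yh (x 0))
    (hzs : ∀ j, zs j ∈ proxSet g μ (c (x j) + μ • yh))
    (hdir : ∀ j, (inner ℝ (gradF f c μ yh (x j) (zs j)) (d j) : ℝ) ≤
        -(θ * (‖gradF f c μ yh (x j) (zs j)‖ * ‖d j‖)) ∧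
      ω * ‖gradF f c μ yh (x j) (zs j)‖ ≤ ‖d j‖)
    (hγ : ∀ j, γ j = β ^ l j)
    (hls : ∀ j, pfun f c g μ yh (x j + γ j • d j) ≤
      Φ j + ((α * γ j * (inner ℝ (gradF f c μ yh (x j) (zs j)) (d j) : ℝ) : ℝ) : EReal))
    (hlargest : ∀ j, ∀ l' < l j, ¬ (pfun f c g μ yh (x j + β ^ l' • d j) ≤
      Φ j + ((α * β ^ l' * (inner ℝ (gradF f c μ yh (x j) (zs j)) (d j) : ℝ) : ℝ) : EReal)))
    (hxupd : ∀ j, pfun f c g μ yh (x (j + 1)) ≤ pfun f c g μ yh (x j + γ j • d j))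
    (hΦupd : ∀ j, Φ (j + 1) =
      ((1 - ν : ℝ) : EReal) * Φ j + ((ν : ℝ) : EReal) * pfun f c g μ yh (x (j + 1)))
    -- inf p ∈ ℝ
    (hinf : ∃ b : ℝ, ∀ x', (b : EReal) ≤ pfun f c g μ yh x')
    -- accumulation point
    (xstar : EuclideanSpace ℝ (Fin n))
    (hacc : ∃ φ : ℕ → ℕ, StrictMono φ ∧ Tendsto (fun k => x (φ k)) atTop (𝓝 xstar))
    : ∃ zstar ∈ proxSet g μ (c xstar + μ • yh),
      gradF f c μ yh xstar zstar = 0 ∧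
      gradient f xstar + μ⁻¹ •
        ContinuousLinearMap.adjoint (fderiv ℝ c xstar) (c xstar + μ • yh - zstar) = 0 := by
  obtain ⟨γ₀, hμγ₀, hpb⟩ := hμthr
  obtain ⟨w, hw⟩ := hgproper
  obtain ⟨b, hb⟩ := hinf
  obtain ⟨φ, hφ, hxφ⟩ := hacc
  set P := fun x' => (pfun f c g μ yh x').toReal
  have hP : ∀ x', pfun f c g μ yh x' = P x' := fun x' =>
    (EReal.coe_toReal (pfun_ne_top hw x') (ne_bot_of_le_ne_bot (EReal.coe_ne_bot b) (hb x'))).symm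
  obtain ⟨r, hr⟩ := EReal.exists_coe_of_affine_rec (v := fun j => ν * P (x (j + 1)))
    ⟨_, hΦ0.trans (hP _)⟩ fun j => by rw [hΦupd, hP]; norm_cast
  simp only [hP, hr] at hΦ0 hΦupd hls hlargest hxupd hb
  norm_cast at hΦ0 hΦupd hls hlargest hxupd hb
  obtain ⟨hPr, hq⟩ := le_and_tendsto_zero_of_nonmonotone_armijo (P := fun j => P (x j)) hα.1 hθ.1
    hν hΦ0 hΦupd (fun j => (hxupd j).trans (hls j)) (fun j => hγ j ▸ pow_nonneg hβ.1.le _)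
    (fun j => (hdir j).1) (fun j => by positivity) fun j => hb (x j)
  obtain ⟨zstar, hzstar, ψ, hψ, hzψ⟩ := hpb.exists_mem_proxSet_tendsto hglsc hμpos hμγ₀ hw
    (((hc.continuous.tendsto xstar).comp hxφ).add_const (μ • yh)) fun k => hzs (φ k)
  have hf' := hf.differentiable one_ne_zero
  have hc' := hc.differentiable one_ne_zero
  have hstat : gradF f c μ yh xstar zstar = 0 :=
    eq_zero_of_armijo_backtracking (Ψ := fun p => gradF f c μ yh p.1 p.2)
      (continuous_gradF hf hc).continuousAt (x := fun k => x (φ (ψ k)))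
      (z := fun k => zs (φ (ψ k))) (m := fun k x' => Ffun f c μ yh x' (zs (φ (ψ k))))
      (fun k u => (hasGradientAt_Ffun hf' hc' _ u).differentiableAt.hasGradientAt)
      (hxφ.comp hψ.tendsto_atTop) hzψ hα.2 hβ.1 hθ.1 hω.1 (fun k => (hdir _).1)
      (fun k => (hdir _).2) (fun k => hγ _) (hq.comp (hφ.comp hψ).tendsto_atTop)
      fun k l' hl' => by
        linarith [not_le.mp (hlargest _ l' hl'), hPr (φ (ψ k)),
          sub_le_Ffun_sub_of_mem_proxSet hP (hzs (φ (ψ k))) (x (φ (ψ k)) + β ^ l' • d (φ (ψ k)))]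
  exact ⟨zstar, hzstar, hstat, (gradF_eq hf' hc' xstar zstar).symm.trans hstat⟩

/-- Every accumulation point of the nonmonotone descent method with
oracle is Υ-stationary for the implicit AL function p. -/
theorem descent_method_accumulation_is_Upsilon_stationary {n m : ℕ}
    (f : EuclideanSpace ℝ (Fin n) → ℝ)
    (c : EuclideanSpace ℝ (Fin n) → EuclideanSpace ℝ (Fin m))
    (g : EuclideanSpace ℝ (Fin m) → EReal)
    (hf : ContDiff ℝ 1 f) (hc : ContDiff ℝ 1 c)
    (hgproper : ∃ z, g z ≠ ⊤) (hgbot : ∀ z, g z ≠ ⊥)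
    (hglsc : LowerSemicontinuous g)
    (μ : ℝ) (hμpos : 0 < μ)
    (hμthr : ∃ γ0 : ℝ, μ < γ0 ∧ ProxBoundedAt g γ0)
    (yh : EuclideanSpace ℝ (Fin m))
    -- parameters of the descent method
    (α β θ ω ν : ℝ)
    (hα : α ∈ Set.Ioo (0 : ℝ) 1) (hβ : β ∈ Set.Ioo (0 : ℝ) 1)
    (hθ : θ ∈ Set.Ioo (0 : ℝ) 1)
    (hω : ω ∈ Set.Ioc (0 : ℝ) 1) (hν : ν ∈ Set.Ioc (0 : ℝ) 1)
    -- iterates of the method (run with tolerance ε = 0, never terminating)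
    (x : ℕ → EuclideanSpace ℝ (Fin n)) (zs : ℕ → EuclideanSpace ℝ (Fin m))
    (d : ℕ → EuclideanSpace ℝ (Fin n)) (γ : ℕ → ℝ) (l : ℕ → ℕ) (Φ : ℕ → EReal)
    (hΦ0 : Φ 0 = pfun f c g μ yh (x 0))
    (hzs : ∀ j, zs j ∈ proxSet g μ (c (x j) + μ • yh))
    (hne : ∀ j, gradF f c μ yh (x j) (zs j) ≠ 0)
    (hdir : ∀ j, (inner ℝ (gradF f c μ yh (x j) (zs j)) (d j) : ℝ) ≤
        -(θ * (‖gradF f c μ yh (x j) (zs j)‖ * ‖d j‖)) ∧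
      ω * ‖gradF f c μ yh (x j) (zs j)‖ ≤ ‖d j‖)
    (hγ : ∀ j, γ j = β ^ l j)
    (hls : ∀ j, pfun f c g μ yh (x j + γ j • d j) ≤
      Φ j + ((α * γ j * (inner ℝ (gradF f c μ yh (x j) (zs j)) (d j) : ℝ) : ℝ) : EReal))
    (hlargest : ∀ j, ∀ l' < l j, ¬ (pfun f c g μ yh (x j + β ^ l' • d j) ≤
      Φ j + ((α * β ^ l' * (inner ℝ (gradF f c μ yh (x j) (zs j)) (d j) : ℝ) : ℝ) : EReal)))
    (hxupd : ∀ j, pfun f c g μ yh (x (j + 1)) ≤ pfun f c g μ yh (x j + γ j • d j))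
    (hΦupd : ∀ j, Φ (j + 1) =
      ((1 - ν : ℝ) : EReal) * Φ j + ((ν : ℝ) : EReal) * pfun f c g μ yh (x (j + 1)))
    -- inf p ∈ ℝ
    (hinf : ∃ b : ℝ, ∀ x', (b : EReal) ≤ pfun f c g μ yh x')
    -- accumulation point
    (xstar : EuclideanSpace ℝ (Fin n))
    (hacc : ∃ φ : ℕ → ℕ, StrictMono φ ∧ Tendsto (fun k => x (φ k)) atTop (𝓝 xstar))
    : ∃ zstar ∈ proxSet g μ (c xstar + μ • yh),
      gradF f c μ yh xstar zstar = 0 ∧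
      gradient f xstar + μ⁻¹ •
        ContinuousLinearMap.adjoint (fderiv ℝ c xstar) (c xstar + μ • yh - zstar) = 0 :=
  descent_method_accumulation_is_Upsilon_stationary_general f c g hf hc hgproper hglsc μ hμpos hμthr
    yh α β θ ω ν hα hβ hθ hω hν x zs d γ l Φ hΦ0 hzs hdir hγ hls hlargest hxupd hΦupd hinf xstar
    hacc
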